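/- arXiv:math/0602258 — 2 statements merged into one kernel-verified Lean document; each statement's English description precedes it below -/
import Mathlib

section
/- If c = (c_1,c_2,c_3,c_4,c_5) ∈ ℤ⁵ is cohomology-free with c_5 = 1 and c_1 ≥ 2, then c_2 ≥ 2c_1 − 1, c_3 ≥ 3c_1 − 2, and c_4 ≥ c_1. -/
/-- The primitive ray generators `l₁,…,l₇` of the fan, in counterclockwise order,
acting on `ℤ²` by the dot product. -/
def rayForm : Fin 7 → ℤ × ℤ :=
  ![(1, -1), (2, -1), (3, -1), (1, 0), (0, 1), (-1, 2), (0, -1)]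

/-- Extend `c ∈ ℤ⁵` to seven coefficients by `c₆ = c₇ = 0`. -/
def cExt (c : Fin 5 → ℤ) : Fin 7 → ℤ :=
  fun i => if h : (i : ℕ) < 5 then c ⟨i, h⟩ else 0

/-- `N_c(m) = {i : l_i(m) + c_i < 0}`. -/
def Nset (c : Fin 5 → ℤ) (m : ℤ × ℤ) : Finset (Fin 7) :=
  Finset.univ.filter fun i =>
    (rayForm i).1 * m.1 + (rayForm i).2 * m.2 + cExt c i < 0

/-- A subset of the cyclic index set `Fin 7` is a circular interval if it is empty
or of the form `{a, a+1, …, b}` with indices taken modulo 7. -/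
def IsCircularInterval (S : Finset (Fin 7)) : Prop :=
  S = ∅ ∨ ∃ (a : Fin 7) (n : ℕ),
    S = (Finset.range (n + 1)).image fun j : ℕ => a + Fin.ofNat 7 j

/-- `c ∈ ℤ⁵` is cohomology-free if for every `m ∈ ℤ²` and both `ε ∈ {1, -1}`,
the set `N_{εc}(m)` is a circular interval different from the whole index set. -/
def CohomologyFree (c : Fin 5 → ℤ) : Prop :=
  ∀ m : ℤ × ℤ, ∀ ε : ℤ, ε = 1 ∨ ε = -1 →
    IsCircularInterval (Nset (ε • c) m) ∧ Nset (ε • c) m ≠ Finset.univ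

/-!
Each bound is witnessed by a single lattice point `m`: if the bound failed, `N_{±c}(m)` would
contain two indices while missing an index on each of the two arcs between them, so it could not
be a circular interval. The bound `c₄ ≥ c₁` feeds into the one for `c₃`.
-/

lemma mem_circularInterval_iff (a : Fin 7) (n : ℕ) (x : Fin 7) :
    x ∈ (Finset.range (n + 1)).image (fun j : ℕ => a + Fin.ofNat 7 j) ↔ (x - a).val ≤ n := by
  simp only [Finset.mem_image, Finset.mem_range]
  constructor
  · rintro ⟨j, hj, rfl⟩
    rw [add_sub_cancel_left, Fin.val_ofNat]
    omega
  · intro hx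
    exact ⟨(x - a).val, by omega, by rw [Fin.ofNat_val_eq_self, add_sub_cancel]⟩

/-- The hypotheses say that `p, q, r, s` occur in this cyclic order. -/
lemma IsCircularInterval.mem_or_mem {S : Finset (Fin 7)} (hS : IsCircularInterval S)
    {p q r s : Fin 7} (hqr : (q - p).val < (r - p).val) (hrs : (r - p).val < (s - p).val)
    (hp : p ∈ S) (hr : r ∈ S) : q ∈ S ∨ s ∈ S := by
  rcases hS with rfl | ⟨a, n, rfl⟩
  · simp at hp
  · simp only [mem_circularInterval_iff, Fin.sub_def] at *
    omega

lemma mem_Nset {c : Fin 5 → ℤ} {m : ℤ × ℤ} {i : Fin 7} :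
    i ∈ Nset c m ↔ (rayForm i).1 * m.1 + (rayForm i).2 * m.2 + cExt c i < 0 := by
  simp [Nset]

namespace CohomologyFree

variable {c : Fin 5 → ℤ}

lemma isCircularInterval (h : CohomologyFree c) (m : ℤ × ℤ) :
    IsCircularInterval (Nset c m) := by
  simpa using (h m 1 (Or.inl rfl)).1

lemma isCircularInterval_neg (h : CohomologyFree c) (m : ℤ × ℤ) :
    IsCircularInterval (Nset (-c) m) := by
  simpa using (h m (-1) (Or.inr rfl)).1

-- At `m = (1 - c 0, 1)` the forms at indices `1, 4, 6, 0` evaluate to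
-- `c 1 - 2 * c 0 + 1, 1 + c 4, -1, 0`.
lemma two_mul_sub_one_le (h : CohomologyFree c) (h4 : -1 ≤ c 4) : 2 * c 0 - 1 ≤ c 1 := by
  have key := (h.isCircularInterval (1 - c 0, 1)).mem_or_mem
    (p := 1) (q := 4) (r := 6) (s := 0) (by decide) (by decide)
  simp [mem_Nset, rayForm, cExt] at key
  omega

-- At `m = (c 0 - 1, 0)`, with `-c`, the indices `0, 3, 4, 6` give `-1, c 0 - 1 - c 3, -c 4, 0`.
lemma le_of_pos (h : CohomologyFree c) (h4 : 0 < c 4) : c 0 ≤ c 3 := by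
  have key := (h.isCircularInterval_neg (c 0 - 1, 0)).mem_or_mem
    (p := 0) (q := 3) (r := 4) (s := 6) (by decide) (by decide)
  simp [mem_Nset, rayForm, cExt] at key
  omega

-- At `m = (-c 0, -2)` the indices `2, 3, 4, 6` give `c 2 - 3 * c 0 + 2, c 3 - c 0, c 4 - 2, 2`.
lemma three_mul_sub_two_le (h : CohomologyFree c) (h4 : c 4 < 2) (h03 : c 0 ≤ c 3) :
    3 * c 0 - 2 ≤ c 2 := by
  have key := (h.isCircularInterval (-c 0, -2)).mem_or_mem
    (p := 2) (q := 3) (r := 4) (s := 6) (by decide) (by decide)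
  simp [mem_Nset, rayForm, cExt] at key
  omega

end CohomologyFree

theorem lower_bounds_c5_one_c1_ge_two_general (c : Fin 5 → ℤ) (h : CohomologyFree c)
    (h5 : c 4 = 1) :
    c 1 ≥ 2 * c 0 - 1 ∧ c 2 ≥ 3 * c 0 - 2 ∧ c 3 ≥ c 0 := by
  have h03 := h.le_of_pos (by omega)
  exact ⟨h.two_mul_sub_one_le (by omega), h.three_mul_sub_two_le (by omega) h03, h03⟩

/-- If `c` is cohomology-free with `c₅ = 1` and `c₁ ≥ 2`, then
`c₂ ≥ 2c₁ - 1`, `c₃ ≥ 3c₁ - 2` and `c₄ ≥ c₁`. -/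
theorem lower_bounds_c5_one_c1_ge_two (c : Fin 5 → ℤ) (h : CohomologyFree c)
    (h5 : c 4 = 1) (h1 : 2 ≤ c 0) :
    c 1 ≥ 2 * c 0 - 1 ∧ c 2 ≥ 3 * c 0 - 2 ∧ c 3 ≥ c 0 :=
  lower_bounds_c5_one_c1_ge_two_general c h h5
end

section
/- Let A = {A_1, ..., A_7} where A_1=(0,0,1,0,0), A_2=(0,1,1,0,0), A_3=(0,1,2,1,0), A_4=(1,1,1,0,0), A_5=(1,1,2,1,0), A_6=(1,2,2,1,0), A_7=(1,2,3,1,0). If S is a subset of A ∪ (−A) such that d − d' is cohomology-free for all d, d' ∈ S, then S has at most 2 elements. -/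
/-- The tuples `A₁,…,A₇` (indexed here by `0,…,6`). -/
def Afam : Fin 7 → (Fin 5 → ℤ) :=
  ![![0,0,1,0,0], ![0,1,1,0,0], ![0,1,2,1,0], ![1,1,1,0,0],
    ![1,1,2,1,0], ![1,2,2,1,0], ![1,2,3,1,0]]

/-!
Cohomology-freeness of `c` forces each `N_{±c}(m)` to be a circular interval, and a circular
interval `S` has at most one element `i` with `i + 1 ∉ S`. Testing this necessary condition at the
three points `m = (1, 0), (0, 1), (-1, -1)` alone already shows, by a finite check, that no three
distinct elements of `±A` have pairwise differences passing it.
-/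

open Finset

def rightEnds {α : Type*} [DecidableEq α] [Add α] [One α] (S : Finset α) : Finset α :=
  S.filter fun i => i + 1 ∉ S

theorem IsCircularInterval.card_rightEnds_le_one {S : Finset (Fin 7)}
    (hS : IsCircularInterval S) : #(rightEnds S) ≤ 1 := by
  obtain rfl | ⟨a, n, rfl⟩ := hS
  · simp [rightEnds]
  refine card_le_one_iff_subset_singleton.2 ⟨a + Fin.ofNat 7 n, fun i hi => ?_⟩
  simp only [rightEnds, mem_filter, mem_image, mem_range, not_exists, not_and] at hi
  obtain ⟨⟨j, hj, rfl⟩, hnext⟩ := hi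
  obtain rfl | hjn : j = n ∨ j < n := by omega
  · exact mem_singleton_self _
  · refine absurd (hnext (j + 1) (by omega)) (not_not.2 ?_)
    rw [add_assoc]
    congr 1
    ext
    simp [Fin.val_add]

def CircularAt (c : Fin 5 → ℤ) (m : ℤ × ℤ) : Prop :=
  #(rightEnds (Nset c m)) ≤ 1 ∧ #(rightEnds (Nset (-c) m)) ≤ 1

instance (c : Fin 5 → ℤ) (m : ℤ × ℤ) : Decidable (CircularAt c m) := by
  unfold CircularAt
  infer_instance

theorem CohomologyFree.circularAt {c : Fin 5 → ℤ} (hc : CohomologyFree c) (m : ℤ × ℤ) :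
    CircularAt c m := by
  have hpos := (hc m 1 (Or.inl rfl)).1
  have hneg := (hc m (-1) (Or.inr rfl)).1
  rw [one_smul] at hpos
  rw [neg_one_smul] at hneg
  exact ⟨hpos.card_rightEnds_le_one, hneg.card_rightEnds_le_one⟩

def signedA : Finset (Fin 5 → ℤ) :=
  univ.image Afam ∪ univ.image (-Afam)

theorem mem_signedA_of_exists {d : Fin 5 → ℤ} (h : ∃ i, d = Afam i ∨ d = -Afam i) : d ∈ signedA := by
  obtain ⟨i, rfl | rfl⟩ := h
  · exact mem_union_left _ (mem_image_of_mem _ (mem_univ i))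
  · exact mem_union_right _ (mem_image_of_mem (-Afam) (mem_univ i))

theorem signedA_no_circular_triangle :
    ∀ a ∈ signedA, ∀ b ∈ signedA, ∀ c ∈ signedA, a ≠ b → a ≠ c → b ≠ c →
      ¬ ∀ m ∈ ([(1, 0), (0, 1), (-1, -1)] : List (ℤ × ℤ)),
        CircularAt (a - b) m ∧ CircularAt (a - c) m ∧ CircularAt (b - c) m := by
  decide

/-- At most two elements of `{±A₁, …, ±A₇}` can have all pairwise differences
cohomology-free. -/
theorem at_most_two_A (S : Finset (Fin 5 → ℤ))
    (hS : ∀ d ∈ S, ∃ i : Fin 7, d = Afam i ∨ d = -Afam i)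
    (hdiff : ∀ d ∈ S, ∀ d' ∈ S, CohomologyFree (d - d')) :
    S.card ≤ 2 := by
  by_contra! hcard
  obtain ⟨a, ha, b, hb, c, hc, hab, hac, hbc⟩ := two_lt_card.1 hcard
  refine signedA_no_circular_triangle a (mem_signedA_of_exists (hS a ha)) b (mem_signedA_of_exists (hS b hb))
    c (mem_signedA_of_exists (hS c hc)) hab hac hbc fun m _ => ?_
  exact ⟨(hdiff a ha b hb).circularAt m, (hdiff a ha c hc).circularAt m,
    (hdiff b hb c hc).circularAt m⟩
end
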